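/- (Lemma 2.1) Let Ω ⊂ ℝ³ be a bounded open set, let t₀ > 0 and ρ > 0, and let V : ℝ³ × ℝ × ℝ³ × ℝ → ℝ, written V(x, t; ξ, τ), be infinitely differentiable. Assume: (i) for every fixed (ξ, τ), the function (x, t) ↦ V(x, t; ξ, τ) satisfies the heat equation ∂V/∂t = ρ Δ_x V; and (ii) V(x, t; ξ, t) = 0 for all x, ξ, t. Define the kernel K(x, t; ξ, τ) = Σ_{i=1}^{3} ∂²V/∂x_i ∂ξ_i (x, t; ξ, τ) + Δ_x V(x, t; ξ, τ). Then for every p ∈ L²(Ω × (0, t₀)), the function (V ∗ p)(x, t) = ∫₀ᵗ ∫_Ω K(x, t; ξ, τ) p(ξ, τ) dξ dτ satisfies T (V ∗ p)(x, t) = ∂(V ∗ p)/∂t (x, t) − ρ · Δ_x (V ∗ p)(x, t) = 0 for all x ∈ ℝ³ and t ∈ (0, t₀). -/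

import Mathlib

theorem lip_aux {φ φ' : ℝ → ℝ} {C τ : ℝ} {s : Set ℝ} (hs : Convex ℝ s)
    (hφ : ∀ u ∈ s, HasDerivAt φ (φ' u) u) (hb : ∀ u ∈ s, |φ' u| ≤ C)
    (hτ0 : τ ∈ s → φ τ = 0) {a b : ℝ} (ha : a ∈ s) (hbs : b ∈ s) (hab : a ≤ b) :
    |(if τ < b then φ b else 0) - (if τ < a then φ a else 0)| ≤ C * |b - a| := by
  have hC0 : 0 ≤ C := le_trans (abs_nonneg _) (hb a ha)
  have mvt : ∀ u v, u ∈ s → v ∈ s → |φ v - φ u| ≤ C * |v - u| := by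
    intro u v hu hv
    have := hs.norm_image_sub_le_of_norm_hasDerivWithin_le
      (fun y hy => (hφ y hy).hasDerivWithinAt)
      (fun y hy => by simpa [Real.norm_eq_abs] using hb y hy) hu hv
    simpa [Real.norm_eq_abs] using this
  by_cases h1 : τ < a
  · have h2 : τ < b := lt_of_lt_of_le h1 hab
    rw [if_pos h1, if_pos h2]
    exact mvt a b ha hbs
  · by_cases h2 : τ < b
    · have hτs : τ ∈ s := hs.ordConnected.out ha hbs ⟨not_lt.1 h1, h2.le⟩
      rw [if_pos h2, if_neg h1, sub_zero]
      have h3 := mvt τ b hτs hbs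
      rw [hτ0 hτs, sub_zero] at h3
      refine h3.trans (mul_le_mul_of_nonneg_left ?_ hC0)
      rw [abs_of_nonneg (sub_nonneg.2 h2.le), abs_of_nonneg (sub_nonneg.2 hab)]
      have := not_lt.1 h1
      linarith
    · rw [if_neg h1, if_neg h2, sub_zero, abs_zero]
      exact mul_nonneg hC0 (abs_nonneg _)

theorem lip_aux' {φ φ' : ℝ → ℝ} {C τ : ℝ} {s : Set ℝ} (hs : Convex ℝ s)
    (hφ : ∀ u ∈ s, HasDerivAt φ (φ' u) u) (hb : ∀ u ∈ s, |φ' u| ≤ C)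
    (hτ0 : τ ∈ s → φ τ = 0) {a b : ℝ} (ha : a ∈ s) (hbs : b ∈ s) :
    |(if τ < b then φ b else 0) - (if τ < a then φ a else 0)| ≤ C * |b - a| := by
  rcases le_total a b with h | h
  · exact lip_aux hs hφ hb hτ0 ha hbs h
  · rw [abs_sub_comm, abs_sub_comm b a]
    exact lip_aux hs hφ hb hτ0 hbs ha h

open MeasureTheory

section PD

variable {E : Type*} [NormedAddCommGroup E] [NormedSpace ℝ E]

/-- Directional derivative operator. -/
noncomputable def pd (v : E) (f : E → ℝ) : E → ℝ := fun q => fderiv ℝ f q v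

theorem pd_contDiff {f : E → ℝ} (hf : ContDiff ℝ (⊤ : ℕ∞) f) (v : E) :
    ContDiff ℝ (⊤ : ℕ∞) (pd v f) :=
  (hf.fderiv_right (by simp)).clm_apply contDiff_const

theorem hasDerivAt_line {f : E → ℝ} (hf : Differentiable ℝ f) (q v : E) (c : ℝ) :
    HasDerivAt (fun a : ℝ => f (q + a • v)) (pd v f (q + c • v)) c := by
  have h1 : HasDerivAt (fun a : ℝ => q + a • v) v c := by
    simpa using ((hasDerivAt_id c).smul_const v).const_add q
  exact (hf (q + c • v)).hasFDerivAt.comp_hasDerivAt c h1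

theorem pd_comm {f : E → ℝ} (hf : ContDiff ℝ (⊤ : ℕ∞) f) (u v : E) (q : E) :
    pd u (pd v f) q = pd v (pd u f) q := by
  have hd : ∀ w : E, HasFDerivAt (fun q => fderiv ℝ f q w)
      ((fderiv ℝ (fderiv ℝ f) q).flip w) q := by
    intro w
    have h2 : HasFDerivAt (fderiv ℝ f) (fderiv ℝ (fderiv ℝ f) q) q :=
      ((hf.fderiv_right (m := 1) (WithTop.coe_le_coe.2 le_top)).differentiable (by norm_num) q).hasFDerivAt
    exact (ContinuousLinearMap.apply ℝ ℝ w).hasFDerivAt.comp q h2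
  have hsymm := (hf.contDiffAt (x := q)).isSymmSndFDerivAt (by rw [minSmoothness_of_isRCLikeNormedField]; exact le_trans (by norm_num : (2 : WithTop ℕ∞) ≤ ((2:ℕ∞) : WithTop ℕ∞)) (WithTop.coe_le_coe.2 le_top))
  show fderiv ℝ (fun q => fderiv ℝ f q v) q u = fderiv ℝ (fun q => fderiv ℝ f q u) q v
  rw [(hd v).fderiv, (hd u).fderiv]
  simp only [ContinuousLinearMap.flip_apply]
  exact hsymm u v

theorem pd_comm' {f : E → ℝ} (hf : ContDiff ℝ (⊤ : ℕ∞) f) (u v : E) :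
    pd u (pd v f) = pd v (pd u f) :=
  funext (pd_comm hf u v)

theorem pd_comm4 {f : E → ℝ} (hf : ContDiff ℝ (⊤ : ℕ∞) f) (a b c d : E) (q : E) :
    pd a (pd b (pd c (pd d f))) q = pd c (pd d (pd a (pd b f))) q := by
  rw [pd_comm' (pd_contDiff hf d) b c, pd_comm' hf b d,
    pd_comm (pd_contDiff (pd_contDiff hf b) d) a c,
    pd_comm' (pd_contDiff hf b) a d]

theorem pd_apply_add {f g : E → ℝ} {q : E} (hf : DifferentiableAt ℝ f q)
    (hg : DifferentiableAt ℝ g q) (v : E) :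
    pd v (fun q => f q + g q) q = pd v f q + pd v g q := by
  simp [pd, fderiv_fun_add hf hg]

theorem pd_apply_sum {ι : Type*} {s : Finset ι} {f : ι → E → ℝ} {q : E}
    (hf : ∀ i ∈ s, DifferentiableAt ℝ (f i) q) (v : E) :
    pd v (fun q => ∑ i ∈ s, f i q) q = ∑ i ∈ s, pd v (f i) q := by
  simp [pd, fderiv_fun_sum hf]

theorem pd_apply_const_mul {f : E → ℝ} {q : E} (hf : DifferentiableAt ℝ f q) (c : ℝ) (v : E) :
    pd v (fun q => c * f q) q = c * pd v f q := by
  simp [pd, fderiv_const_mul hf c]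

end PD

abbrev E4 := ((Fin 3 → ℝ) × ℝ) × ((Fin 3 → ℝ) × ℝ)

def dirX (i : Fin 3) : E4 := ((Pi.single i (1:ℝ), 0), 0)
def dirT : E4 := ((0, 1), 0)
def dirXi (i : Fin 3) : E4 := (0, (Pi.single i (1:ℝ), 0))

theorem update_eq (x : Fin 3 → ℝ) (i : Fin 3) (a : ℝ) :
    Function.update x i a = x + (a - x i) • (Pi.single i 1 : Fin 3 → ℝ) := by
  funext j
  rcases eq_or_ne j i with rfl | hj
  · simp only [Function.update_self, Pi.add_apply, Pi.smul_apply, Pi.single_eq_same,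
      smul_eq_mul, mul_one]
    ring
  · simp [Function.update_of_ne hj, Pi.single_eq_of_ne hj]

theorem update_eq0 (x : Fin 3 → ℝ) (i : Fin 3) (a : ℝ) :
    Function.update x i a = Function.update x i 0 + a • (Pi.single i 1 : Fin 3 → ℝ) := by
  rw [update_eq, update_eq]; funext j; simp [Pi.single_apply]; split <;> ring

/-- Derivative along the `i`-th space coordinate of the first block. -/
theorem hasDerivAt_sliceX {f : E4 → ℝ} (hf : Differentiable ℝ f) (x : Fin 3 → ℝ) (t : ℝ)
    (z : (Fin 3 → ℝ) × ℝ) (i : Fin 3) (c : ℝ) :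
    HasDerivAt (fun a => f ((Function.update x i a, t), z))
      (pd (dirX i) f ((Function.update x i c, t), z)) c := by
  have h0 : ∀ a : ℝ, (((Function.update x i 0, t), z) : E4) + a • dirX i
      = ((Function.update x i a, t), z) := by
    intro a
    rw [update_eq0 x i a]
    simp [dirX, Prod.ext_iff]
  simpa only [h0] using hasDerivAt_line hf ((Function.update x i 0, t), z) (dirX i) c

theorem hasDerivAt_sliceXi {f : E4 → ℝ} (hf : Differentiable ℝ f) (w : (Fin 3 → ℝ) × ℝ)
    (ξ : Fin 3 → ℝ) (τ : ℝ) (i : Fin 3) (c : ℝ) :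
    HasDerivAt (fun b => f (w, (Function.update ξ i b, τ)))
      (pd (dirXi i) f (w, (Function.update ξ i c, τ))) c := by
  have h0 : ∀ b : ℝ, ((w, (Function.update ξ i 0, τ)) : E4) + b • dirXi i
      = (w, (Function.update ξ i b, τ)) := by
    intro b
    rw [update_eq0 ξ i b]
    simp [dirXi, Prod.ext_iff]
  simpa only [h0] using hasDerivAt_line hf (w, (Function.update ξ i 0, τ)) (dirXi i) c

theorem hasDerivAt_sliceT {f : E4 → ℝ} (hf : Differentiable ℝ f) (x : Fin 3 → ℝ)
    (z : (Fin 3 → ℝ) × ℝ) (t : ℝ) :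
    HasDerivAt (fun s => f ((x, s), z)) (pd dirT f ((x, t), z)) t := by
  have h0 : ∀ s : ℝ, (((x, 0), z) : E4) + s • dirT = ((x, s), z) := by
    intro s
    simp [dirT, Prod.ext_iff]
  simpa only [h0] using hasDerivAt_line hf ((x, 0), z) dirT t

/-- Uncurried version of `V`. -/
def unc (V : (Fin 3 → ℝ) → ℝ → (Fin 3 → ℝ) → ℝ → ℝ) : E4 → ℝ :=
  fun q => V q.1.1 q.1.2 q.2.1 q.2.2

/-- The kernel as a function on `E4`. -/
noncomputable def KW (V : (Fin 3 → ℝ) → ℝ → (Fin 3 → ℝ) → ℝ → ℝ) : E4 → ℝ :=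
  fun q => (∑ i : Fin 3, pd (dirX i) (pd (dirXi i) (unc V)) q) +
    ∑ i : Fin 3, pd (dirX i) (pd (dirX i) (unc V)) q

theorem KW_contDiff {V} (hV : ContDiff ℝ (⊤ : ℕ∞) (unc V)) : ContDiff ℝ (⊤ : ℕ∞) (KW V) :=
  (ContDiff.sum fun i _ => pd_contDiff (pd_contDiff hV (dirXi i)) (dirX i)).add
    (ContDiff.sum fun i _ => pd_contDiff (pd_contDiff hV (dirX i)) (dirX i))

/-- The kernel `K(x, t; ξ, τ) = Σ_i ∂²V/∂x_i∂ξ_i + Δ_x V`. -/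
noncomputable def kernelK (V : (Fin 3 → ℝ) → ℝ → (Fin 3 → ℝ) → ℝ → ℝ)
    (x : Fin 3 → ℝ) (t : ℝ) (ξ : Fin 3 → ℝ) (τ : ℝ) : ℝ :=
  (∑ i : Fin 3,
    deriv (fun a => deriv (fun b => V (Function.update x i a) t (Function.update ξ i b) τ)
      (ξ i)) (x i)) +
  ∑ i : Fin 3, deriv (deriv (fun a => V (Function.update x i a) t ξ τ)) (x i)

section Translate

variable {V : (Fin 3 → ℝ) → ℝ → (Fin 3 → ℝ) → ℝ → ℝ} (hV : ContDiff ℝ (⊤ : ℕ∞) (unc V))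

include hV

theorem kernelK_eq (x : Fin 3 → ℝ) (t : ℝ) (ξ : Fin 3 → ℝ) (τ : ℝ) :
    kernelK V x t ξ τ = KW V ((x, t), (ξ, τ)) := by
  have hVd : Differentiable ℝ (unc V) := hV.differentiable (by simp)
  unfold kernelK KW
  congr 1
  · refine Finset.sum_congr rfl fun i _ => ?_
    have h1 : ∀ a : ℝ, deriv (fun b => V (Function.update x i a) t (Function.update ξ i b) τ)
        (ξ i) = pd (dirXi i) (unc V) ((Function.update x i a, t), (ξ, τ)) := by
      intro a
      have := (hasDerivAt_sliceXi hVd (Function.update x i a, t) ξ τ i (ξ i)).deriv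
      rwa [Function.update_eq_self] at this
    simp only [h1]
    have := (hasDerivAt_sliceX ((pd_contDiff hV (dirXi i)).differentiable (by simp))
      x t (ξ, τ) i (x i)).deriv
    rwa [Function.update_eq_self] at this
  · refine Finset.sum_congr rfl fun i _ => ?_
    have h1 : deriv (fun a => V (Function.update x i a) t ξ τ)
        = fun c => pd (dirX i) (unc V) ((Function.update x i c, t), (ξ, τ)) := by
      funext c
      exact (hasDerivAt_sliceX hVd x t (ξ, τ) i c).deriv
    rw [h1]
    have := (hasDerivAt_sliceX ((pd_contDiff hV (dirX i)).differentiable (by simp))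
      x t (ξ, τ) i (x i)).deriv
    rwa [Function.update_eq_self] at this

theorem heat_unc {ρ : ℝ}
    (hheat : ∀ (ξ : Fin 3 → ℝ) (τ : ℝ) (x : Fin 3 → ℝ) (t : ℝ),
      deriv (fun s => V x s ξ τ) t =
        ρ * ∑ i : Fin 3, deriv (deriv (fun y => V (Function.update x i y) t ξ τ)) (x i)) :
    pd dirT (unc V) = fun q =>
      ρ * ∑ i : Fin 3, pd (dirX i) (pd (dirX i) (unc V)) q := by
  have hVd : Differentiable ℝ (unc V) := hV.differentiable (by simp)
  funext q
  obtain ⟨⟨x, t⟩, ξ, τ⟩ := q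
  have hL : deriv (fun s => V x s ξ τ) t = pd dirT (unc V) ((x, t), (ξ, τ)) :=
    (hasDerivAt_sliceT hVd x (ξ, τ) t).deriv
  have hR : ∀ i : Fin 3, deriv (deriv (fun y => V (Function.update x i y) t ξ τ)) (x i)
      = pd (dirX i) (pd (dirX i) (unc V)) ((x, t), (ξ, τ)) := by
    intro i
    have h1 : deriv (fun a => V (Function.update x i a) t ξ τ)
        = fun c => pd (dirX i) (unc V) ((Function.update x i c, t), (ξ, τ)) := by
      funext c
      exact (hasDerivAt_sliceX hVd x t (ξ, τ) i c).deriv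
    rw [h1]
    have := (hasDerivAt_sliceX ((pd_contDiff hV (dirX i)).differentiable (by simp))
      x t (ξ, τ) i (x i)).deriv
    rwa [Function.update_eq_self] at this
  have := hheat ξ τ x t
  rw [hL] at this
  simp only [hR] at this
  exact this

omit hV in
theorem pd_diag {f : E4 → ℝ} (hf : Differentiable ℝ f)
    (hd : ∀ (x ξ : Fin 3 → ℝ) (t : ℝ), f ((x, t), (ξ, t)) = 0)
    (v : E4) (hv2 : v.1.2 = 0) (hv4 : v.2.2 = 0) :
    ∀ (x ξ : Fin 3 → ℝ) (t : ℝ), pd v f ((x, t), (ξ, t)) = 0 := by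
  intro x ξ t
  have h0 : pd v f ((x, t), (ξ, t))
      = deriv (fun a : ℝ => f ((((x, t), (ξ, t)) : E4) + a • v)) 0 := by
    have := (hasDerivAt_line hf ((x, t), (ξ, t)) v 0).deriv
    rw [this]; simp
  rw [h0]
  have h1 : (fun a : ℝ => f ((((x, t), (ξ, t)) : E4) + a • v)) = fun _ => 0 := by
    funext a
    have : ((((x, t), (ξ, t)) : E4) + a • v)
        = ((x + a • v.1.1, t), (ξ + a • v.2.1, t)) := by
      simp [Prod.ext_iff, hv2, hv4]
    rw [this, hd]
  rw [h1, deriv_const]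

theorem KW_diag (hdiag : ∀ (x ξ : Fin 3 → ℝ) (t : ℝ), V x t ξ t = 0) :
    ∀ (x ξ : Fin 3 → ℝ) (t : ℝ), KW V ((x, t), (ξ, t)) = 0 := by
  intro x ξ t
  have hVd : Differentiable ℝ (unc V) := hV.differentiable (by simp)
  have hd0 : ∀ (x ξ : Fin 3 → ℝ) (t : ℝ), unc V ((x, t), (ξ, t)) = 0 := fun x ξ t => hdiag x ξ t
  have h1 : ∀ i : Fin 3, pd (dirX i) (pd (dirXi i) (unc V)) ((x, t), (ξ, t)) = 0 := by
    intro i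
    exact pd_diag ((pd_contDiff hV (dirXi i)).differentiable (by simp))
      (pd_diag hVd hd0 (dirXi i) rfl rfl) (dirX i) rfl rfl x ξ t
  have h2 : ∀ i : Fin 3, pd (dirX i) (pd (dirX i) (unc V)) ((x, t), (ξ, t)) = 0 := by
    intro i
    exact pd_diag ((pd_contDiff hV (dirX i)).differentiable (by simp))
      (pd_diag hVd hd0 (dirX i) rfl rfl) (dirX i) rfl rfl x ξ t
  simp [KW, h1, h2]

theorem KW_heat {ρ : ℝ}
    (hheat : ∀ (ξ : Fin 3 → ℝ) (τ : ℝ) (x : Fin 3 → ℝ) (t : ℝ),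
      deriv (fun s => V x s ξ τ) t =
        ρ * ∑ i : Fin 3, deriv (deriv (fun y => V (Function.update x i y) t ξ τ)) (x i))
    (q : E4) :
    pd dirT (KW V) q = ρ * ∑ j : Fin 3, pd (dirX j) (pd (dirX j) (KW V)) q := by
  have hW := hV
  have hheatf := heat_unc hV hheat
  -- differentiability facts
  have hdiff2 : ∀ (a b : E4), ContDiff ℝ (⊤ : ℕ∞) (pd a (pd b (unc V))) :=
    fun a b => pd_contDiff (pd_contDiff hW b) a
  have hdiff4 : ∀ (a b c d : E4), ContDiff ℝ (⊤ : ℕ∞) (pd a (pd b (pd c (pd d (unc V))))) :=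
    fun a b c d => pd_contDiff (pd_contDiff (hdiff2 c d) b) a
  -- Step 1: expand LHS
  have step1 : pd dirT (KW V) q
      = (∑ i : Fin 3, pd dirT (pd (dirX i) (pd (dirXi i) (unc V))) q)
        + ∑ i : Fin 3, pd dirT (pd (dirX i) (pd (dirX i) (unc V))) q := by
    unfold KW
    rw [pd_apply_add (by exact (ContDiff.sum fun i _ =>
        pd_contDiff (pd_contDiff hW (dirXi i)) (dirX i)).differentiable (by simp) |>.differentiableAt)
      (by exact (ContDiff.sum fun i _ =>
        pd_contDiff (pd_contDiff hW (dirX i)) (dirX i)).differentiable (by simp) |>.differentiableAt)]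
    rw [pd_apply_sum (fun i _ => ((pd_contDiff (pd_contDiff hW (dirXi i))
        (dirX i)).differentiable (by simp)).differentiableAt) dirT,
      pd_apply_sum (fun i _ => ((pd_contDiff (pd_contDiff hW (dirX i))
        (dirX i)).differentiable (by simp)).differentiableAt) dirT]
  -- move `dirT` inside and apply heat equation
  have key : ∀ (a b : E4), a.1.2 = 0 → a.2.2 = 0 → pd dirT (pd a (pd b (unc V))) q
      = ρ * ∑ j : Fin 3, pd a (pd b (pd (dirX j) (pd (dirX j) (unc V)))) q := by
    intro a b _ _
    have e1 : pd dirT (pd a (pd b (unc V))) q = pd a (pd dirT (pd b (unc V))) q :=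
      pd_comm (pd_contDiff hW b) dirT a q
    rw [e1, pd_comm' hW dirT b, hheatf]
    -- now: pd a (pd b (fun q => ρ * ∑ j, ...)) q
    have e2 : pd b (fun q => ρ * ∑ j : Fin 3, pd (dirX j) (pd (dirX j) (unc V)) q)
        = fun q' => ρ * ∑ j : Fin 3, pd b (pd (dirX j) (pd (dirX j) (unc V))) q' := by
      funext q'
      rw [pd_apply_const_mul (by exact ((ContDiff.sum fun j _ =>
        hdiff2 (dirX j) (dirX j)).differentiable (by simp)).differentiableAt) ρ b]
      rw [pd_apply_sum (fun j _ => ((hdiff2 (dirX j) (dirX j)).differentiable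
        (by simp)).differentiableAt) b]
    rw [e2]
    rw [pd_apply_const_mul (by exact ((ContDiff.sum fun j _ =>
      pd_contDiff (hdiff2 (dirX j) (dirX j)) b).differentiable (by simp)).differentiableAt) ρ a]
    rw [pd_apply_sum (fun j _ => ((pd_contDiff (hdiff2 (dirX j) (dirX j))
      b).differentiable (by simp)).differentiableAt) a]
  have keyx : ∀ i : Fin 3, pd dirT (pd (dirX i) (pd (dirXi i) (unc V))) q
      = ρ * ∑ j : Fin 3, pd (dirX i) (pd (dirXi i) (pd (dirX j) (pd (dirX j) (unc V)))) q :=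
    fun i => key (dirX i) (dirXi i) rfl rfl
  have keyy : ∀ i : Fin 3, pd dirT (pd (dirX i) (pd (dirX i) (unc V))) q
      = ρ * ∑ j : Fin 3, pd (dirX i) (pd (dirX i) (pd (dirX j) (pd (dirX j) (unc V)))) q :=
    fun i => key (dirX i) (dirX i) rfl rfl
  have rhs1 : ∀ j : Fin 3, pd (dirX j) (KW V)
      = fun q' => (∑ i : Fin 3, pd (dirX j) (pd (dirX i) (pd (dirXi i) (unc V))) q')
        + ∑ i : Fin 3, pd (dirX j) (pd (dirX i) (pd (dirX i) (unc V))) q' := by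
    intro j
    funext q'
    unfold KW
    rw [pd_apply_add (((ContDiff.sum fun i _ => hdiff2 (dirX i) (dirXi i)).differentiable
        (by simp)).differentiableAt)
      (((ContDiff.sum fun i _ => hdiff2 (dirX i) (dirX i)).differentiable
        (by simp)).differentiableAt),
      pd_apply_sum (fun i _ => ((hdiff2 (dirX i) (dirXi i)).differentiable
        (by simp)).differentiableAt),
      pd_apply_sum (fun i _ => ((hdiff2 (dirX i) (dirX i)).differentiable
        (by simp)).differentiableAt)]
  have rhs2 : ∀ j : Fin 3, pd (dirX j) (pd (dirX j) (KW V)) q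
      = (∑ i : Fin 3, pd (dirX j) (pd (dirX j) (pd (dirX i) (pd (dirXi i) (unc V)))) q)
        + ∑ i : Fin 3, pd (dirX j) (pd (dirX j) (pd (dirX i) (pd (dirX i) (unc V)))) q := by
    intro j
    rw [rhs1 j]
    rw [pd_apply_add (((ContDiff.sum fun i _ => pd_contDiff (hdiff2 (dirX i) (dirXi i))
        (dirX j)).differentiable (by simp)).differentiableAt)
      (((ContDiff.sum fun i _ => pd_contDiff (hdiff2 (dirX i) (dirX i))
        (dirX j)).differentiable (by simp)).differentiableAt),
      pd_apply_sum (fun i _ => ((pd_contDiff (hdiff2 (dirX i) (dirXi i))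
        (dirX j)).differentiable (by simp)).differentiableAt),
      pd_apply_sum (fun i _ => ((pd_contDiff (hdiff2 (dirX i) (dirX i))
        (dirX j)).differentiable (by simp)).differentiableAt)]
  have hc1 : ∀ i j : Fin 3,
      pd (dirX i) (pd (dirXi i) (pd (dirX j) (pd (dirX j) (unc V)))) q
      = pd (dirX j) (pd (dirX j) (pd (dirX i) (pd (dirXi i) (unc V)))) q :=
    fun i j => pd_comm4 hW _ _ _ _ q
  have hc2 : ∀ i j : Fin 3,
      pd (dirX i) (pd (dirX i) (pd (dirX j) (pd (dirX j) (unc V)))) q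
      = pd (dirX j) (pd (dirX j) (pd (dirX i) (pd (dirX i) (unc V)))) q :=
    fun i j => pd_comm4 hW _ _ _ _ q
  rw [step1]
  simp only [keyx, keyy, rhs2]
  simp only [hc1]
  rw [Finset.mul_sum]
  simp only [mul_add, Finset.sum_add_distrib, Finset.mul_sum]
  congr 1
  exact Finset.sum_comm
end Translate


/-- Lemma 2.1: Let `Ω ⊂ ℝ³` be a bounded open set, `t₀ > 0`, `ρ > 0`, and let
`V(x, t; ξ, τ)` be infinitely differentiable such that (i) for every fixed `(ξ, τ)` the
function `(x, t) ↦ V(x, t; ξ, τ)` solves the heat equation `∂V/∂t = ρ Δ_x V`, and (ii)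
`V(x, t; ξ, t) = 0`. Then for every `p ∈ L²(Ω × (0, t₀))`, the function
`(V ∗ p)(x, t) = ∫₀ᵗ ∫_Ω K(x, t; ξ, τ) p(ξ, τ) dξ dτ` satisfies
`∂(V∗p)/∂t − ρ Δ_x (V∗p) = 0` for all `x ∈ ℝ³`, `t ∈ (0, t₀)`. -/
theorem convolution_with_kernel_solves_heat_equation
    (Ω : Set (Fin 3 → ℝ)) (hΩ_open : IsOpen Ω) (hΩ_bdd : Bornology.IsBounded Ω)
    (t₀ ρ : ℝ) (ht₀ : 0 < t₀) (hρ : 0 < ρ)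
    (V : (Fin 3 → ℝ) → ℝ → (Fin 3 → ℝ) → ℝ → ℝ)
    (hV : ContDiff ℝ (⊤ : ℕ∞) (fun q : ((Fin 3 → ℝ) × ℝ) × ((Fin 3 → ℝ) × ℝ) =>
      V q.1.1 q.1.2 q.2.1 q.2.2))
    (hheat : ∀ (ξ : Fin 3 → ℝ) (τ : ℝ) (x : Fin 3 → ℝ) (t : ℝ),
      deriv (fun s => V x s ξ τ) t =
        ρ * ∑ i : Fin 3, deriv (deriv (fun y => V (Function.update x i y) t ξ τ)) (x i))
    (hdiag : ∀ (x ξ : Fin 3 → ℝ) (t : ℝ), V x t ξ t = 0)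
    (p : (Fin 3 → ℝ) → ℝ → ℝ)
    (hp : MemLp (fun q : (Fin 3 → ℝ) × ℝ => p q.1 q.2) 2
      ((volume.restrict Ω).prod (volume.restrict (Set.Ioo 0 t₀)))) :
    ∀ (x : Fin 3 → ℝ), ∀ t ∈ Set.Ioo 0 t₀,
      deriv (fun s => ∫ τ in (0 : ℝ)..s, ∫ ξ in Ω, kernelK V x s ξ τ * p ξ τ) t -
        ρ * ∑ i : Fin 3,
          deriv (deriv (fun y =>
            ∫ τ in (0 : ℝ)..t, ∫ ξ in Ω, kernelK V (Function.update x i y) t ξ τ * p ξ τ))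
            (x i) = 0 := by
  intro x t ht
  obtain ⟨ht0, ht1⟩ := ht
  set μ := ((volume.restrict Ω).prod (volume.restrict (Set.Ioo 0 t₀))) with hμ
  have hW : ContDiff ℝ (⊤ : ℕ∞) (unc V) := hV
  have hKsm : ContDiff ℝ (⊤ : ℕ∞) (KW V) := KW_contDiff hW
  have hKc : Continuous (KW V) := hKsm.continuous
  have hKd : Differentiable ℝ (KW V) := hKsm.differentiable (by simp)
  have hkeq : ∀ (x' : Fin 3 → ℝ) (t' : ℝ) (ξ : Fin 3 → ℝ) (τ : ℝ),
      kernelK V x' t' ξ τ = KW V ((x', t'), (ξ, τ)) := kernelK_eq hW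
  have hKdiag := KW_diag hW hdiag
  have hKheat := KW_heat hW hheat
  -- measure-theoretic setup
  haveI hfin1 : IsFiniteMeasure (volume.restrict Ω) := by
    constructor
    rw [Measure.restrict_apply_univ]
    exact hΩ_bdd.measure_lt_top
  haveI hfin2 : IsFiniteMeasure (volume.restrict (Set.Ioo 0 t₀)) := by
    constructor
    rw [Measure.restrict_apply_univ]
    simp [Real.volume_Ioo]
  haveI hfinμ : IsFiniteMeasure μ := by rw [hμ]; infer_instance
  have hpae : AEStronglyMeasurable (fun z : (Fin 3 → ℝ) × ℝ => p z.1 z.2) μ :=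
    hp.aestronglyMeasurable
  have hpint : Integrable (fun z : (Fin 3 → ℝ) × ℝ => p z.1 z.2) μ :=
    hp.integrable one_le_two
  have haemem : ∀ᵐ z ∂μ, z ∈ Ω ×ˢ Set.Ioo 0 t₀ := by
    rw [hμ, Measure.prod_restrict]
    exact ae_restrict_mem (hΩ_open.measurableSet.prod measurableSet_Ioo)
  have hΩc : IsCompact (closure Ω) := hΩ_bdd.isCompact_closure
  -- uniform bounds on compacts
  have bnd : ∀ (f : E4 → ℝ), Continuous f → ∀ (K₁ : Set ((Fin 3 → ℝ) × ℝ)), IsCompact K₁ →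
      ∃ C : ℝ, 0 ≤ C ∧ ∀ w ∈ K₁, ∀ ξ ∈ closure Ω, ∀ τ ∈ Set.Icc 0 t₀,
        |f (w, (ξ, τ))| ≤ C := by
    intro f hf K₁ hK₁
    obtain ⟨C, hC⟩ := (hK₁.prod (hΩc.prod (isCompact_Icc (a := (0:ℝ))
      (b := t₀)))).exists_bound_of_continuousOn hf.continuousOn
    refine ⟨max C 0, le_max_right _ _, fun w hw ξ hξ τ hτ => ?_⟩
    exact le_trans (by simpa [Real.norm_eq_abs] using hC (w, (ξ, τ)) ⟨hw, hξ, hτ⟩)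
      (le_max_left _ _)
  -- measurability helper
  have measH : ∀ (s : ℝ) (f : E4 → ℝ), Continuous f → ∀ w : (Fin 3 → ℝ) × ℝ,
      AEStronglyMeasurable
        (fun z : (Fin 3 → ℝ) × ℝ => (if z.2 < s then f (w, z) else 0) * p z.1 z.2) μ := by
    intro s f hf w
    refine AEStronglyMeasurable.mul ?_ hpae
    have h1 : (fun z : (Fin 3 → ℝ) × ℝ => if z.2 < s then f (w, z) else 0)
        = Set.indicator {z : (Fin 3 → ℝ) × ℝ | z.2 < s} (fun z => f (w, z)) := by
      funext z; by_cases h : z.2 < s <;> simp [Set.indicator, h]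
    rw [h1]
    exact ((hf.comp (Continuous.prodMk_right w)).stronglyMeasurable.indicator
      (measurableSet_Iio.preimage measurable_snd)).aestronglyMeasurable
  -- integrability helpers
  have intg : ∀ (f : E4 → ℝ), Continuous f → ∀ w : (Fin 3 → ℝ) × ℝ,
      Integrable (fun z : (Fin 3 → ℝ) × ℝ => f (w, z) * p z.1 z.2) μ := by
    intro f hf w
    obtain ⟨C, hC0, hC⟩ := bnd f hf {w} isCompact_singleton
    refine Integrable.bdd_mul (c := C) hpint
      ((hf.comp (Continuous.prodMk_right w)).aestronglyMeasurable) ?_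
    filter_upwards [haemem] with z hz
    simpa [Real.norm_eq_abs] using
      hC w rfl z.1 (subset_closure hz.1) z.2 ⟨hz.2.1.le, hz.2.2.le⟩
  have intg_ind : ∀ (s : ℝ) (f : E4 → ℝ), Continuous f → ∀ w : (Fin 3 → ℝ) × ℝ,
      Integrable (fun z : (Fin 3 → ℝ) × ℝ =>
        (if z.2 < s then f (w, z) else 0) * p z.1 z.2) μ := by
    intro s f hf w
    have h1 : (fun z : (Fin 3 → ℝ) × ℝ => (if z.2 < s then f (w, z) else 0) * p z.1 z.2)
        = Set.indicator {z : (Fin 3 → ℝ) × ℝ | z.2 < s}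
            (fun z => f (w, z) * p z.1 z.2) := by
      funext z; by_cases h : z.2 < s <;> simp [Set.indicator, h]
    rw [h1]
    exact (intg f hf w).indicator (measurableSet_Iio.preimage measurable_snd)
  -- representation of the iterated integral as an integral over the product measure
  have reprI : ∀ (f : E4 → ℝ), Continuous f → ∀ (w : (Fin 3 → ℝ) × ℝ) (s : ℝ),
      0 ≤ s → s ≤ t₀ →
      ∫ z, (if z.2 < s then f (w, z) else 0) * p z.1 z.2 ∂μ
        = ∫ τ in (0:ℝ)..s, ∫ ξ in Ω, f (w, (ξ, τ)) * p ξ τ := by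
    intro f hf w s hs0 hs1
    rw [hμ] at *
    rw [MeasureTheory.integral_prod_symm _ (intg_ind s f hf w)]
    have h2 : ∀ τ : ℝ, (∫ ξ in Ω, (if τ < s then f (w, (ξ, τ)) else 0) * p ξ τ)
        = Set.indicator (Set.Iio s) (fun τ => ∫ ξ in Ω, f (w, (ξ, τ)) * p ξ τ) τ := by
      intro τ
      by_cases h : τ < s <;> simp [Set.indicator, h]
    simp only [h2]
    rw [integral_indicator measurableSet_Iio,
      Measure.restrict_restrict measurableSet_Iio]
    have hset : Set.Iio s ∩ Set.Ioo 0 t₀ = Set.Ioo 0 s := by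
      ext u
      simp only [Set.mem_inter_iff, Set.mem_Iio, Set.mem_Ioo]
      exact ⟨fun ⟨h1', h2', _⟩ => ⟨h2', h1'⟩,
        fun ⟨h1', h2'⟩ => ⟨h2', h1', lt_of_lt_of_le h2' hs1⟩⟩
    rw [hset, intervalIntegral.integral_of_le hs0,
      ← MeasureTheory.integral_Ioc_eq_integral_Ioo]
  -- ====== the time derivative ======
  set ε := min t (t₀ - t) with hεdef
  have hε0 : 0 < ε := lt_min ht0 (sub_pos.2 ht1)
  have hball : Metric.ball t ε ⊆ Set.Ioo 0 t₀ := by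
    intro s hs
    rw [Metric.mem_ball, Real.dist_eq] at hs
    have h1 := abs_lt.1 hs
    have h2 := min_le_left t (t₀ - t)
    have h3 := min_le_right t (t₀ - t)
    constructor <;> linarith
  have hIcc : Metric.ball t ε ⊆ Set.Icc (t - ε) (t + ε) := by
    intro s hs
    rw [Metric.mem_ball, Real.dist_eq] at hs
    have h1 := abs_lt.1 hs
    constructor <;> linarith
  obtain ⟨C, hC0, hCb⟩ := bnd (pd dirT (KW V)) (pd_contDiff hKsm dirT).continuous
    ({x} ×ˢ Set.Icc (t - ε) (t + ε)) (isCompact_singleton.prod isCompact_Icc)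
  have haet : ∀ᵐ z ∂μ, z.2 ≠ t := by
    have hμt : μ {z : (Fin 3 → ℝ) × ℝ | z.2 = t} = 0 := by
      have hset : {z : (Fin 3 → ℝ) × ℝ | z.2 = t} = Set.univ ×ˢ {t} := by
        ext ⟨a, b⟩; simp [eq_comm]
      rw [hμ, hset, Measure.prod_prod]
      have h0 : (volume.restrict (Set.Ioo 0 t₀)) {t} = 0 := by
        rw [Measure.restrict_apply (measurableSet_singleton t)]
        exact measure_mono_null Set.inter_subset_left Real.volume_singleton
      rw [h0, mul_zero]
    rw [ae_iff]
    have hseteq : {z : (Fin 3 → ℝ) × ℝ | ¬z.2 ≠ t} = {z : (Fin 3 → ℝ) × ℝ | z.2 = t} := by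
      ext z; simp
    rw [hseteq]
    exact hμt
  have hderiv : HasDerivAt
      (fun s => ∫ z, (if z.2 < s then KW V ((x, s), z) else 0) * p z.1 z.2 ∂μ)
      (∫ z, (if z.2 < t then pd dirT (KW V) ((x, t), z) else 0) * p z.1 z.2 ∂μ) t := by
    refine (hasDerivAt_integral_of_dominated_loc_of_lip
      (F := fun s (z : (Fin 3 → ℝ) × ℝ) => (if z.2 < s then KW V ((x, s), z) else 0) * p z.1 z.2)
      (F' := fun z : (Fin 3 → ℝ) × ℝ =>
        (if z.2 < t then pd dirT (KW V) ((x, t), z) else 0) * p z.1 z.2)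
      (bound := fun z : (Fin 3 → ℝ) × ℝ => C * ‖p z.1 z.2‖)
      (Metric.ball_mem_nhds t hε0) (Filter.Eventually.of_forall fun s => measH s (KW V) hKc (x, s))
      (intg_ind t (KW V) hKc (x, t))
      (measH t (pd dirT (KW V)) (pd_contDiff hKsm dirT).continuous (x, t))
      ?_ (hpint.norm.const_mul C) ?_).2
    · -- Lipschitz bound
      filter_upwards [haemem] with z hz
      rw [lipschitzOnWith_iff_dist_le_mul]
      intro s₁ hs₁ s₂ hs₂
      rw [Real.dist_eq, Real.dist_eq]
      have hq : |(if z.2 < s₁ then KW V ((x, s₁), z) else 0)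
          - (if z.2 < s₂ then KW V ((x, s₂), z) else 0)| ≤ C * |s₁ - s₂| := by
        refine lip_aux' (convex_ball t ε) (φ' := fun u => pd dirT (KW V) ((x, u), z))
          (fun u _ => hasDerivAt_sliceT hKd x z u) ?_ ?_ hs₂ hs₁
        · intro u hu
          exact hCb (x, u) ⟨rfl, hIcc hu⟩ z.1 (subset_closure hz.1) z.2
            ⟨hz.2.1.le, hz.2.2.le⟩
        · intro _
          have := hKdiag x z.1 z.2
          simpa using this
      rw [← sub_mul, abs_mul]
      refine le_trans (mul_le_mul_of_nonneg_right hq (abs_nonneg _)) (le_of_eq ?_)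
      rw [Real.coe_nnabs, Real.norm_eq_abs, abs_of_nonneg (mul_nonneg hC0 (abs_nonneg _))]
      ring
    · -- a.e. differentiability at t
      filter_upwards [haet] with z hz
      rcases lt_or_gt_of_ne hz with hlt | hgt
      · have h1 : HasDerivAt (fun s => KW V ((x, s), z) * p z.1 z.2)
            (pd dirT (KW V) ((x, t), z) * p z.1 z.2) t :=
          (hasDerivAt_sliceT hKd x z t).mul_const _
        have hev : (fun s => (if z.2 < s then KW V ((x, s), z) else 0) * p z.1 z.2)
            =ᶠ[nhds t] (fun s => KW V ((x, s), z) * p z.1 z.2) := by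
          filter_upwards [eventually_gt_nhds hlt] with s hs
          rw [if_pos hs]
        rw [if_pos hlt]
        exact h1.congr_of_eventuallyEq hev
      · have hev : (fun s => (if z.2 < s then KW V ((x, s), z) else 0) * p z.1 z.2)
            =ᶠ[nhds t] (fun _ => 0) := by
          filter_upwards [eventually_lt_nhds hgt] with s hs
          rw [if_neg (not_lt.2 hs.le), zero_mul]
        rw [if_neg (not_lt.2 hgt.le), zero_mul]
        exact (hasDerivAt_const t 0).congr_of_eventuallyEq hev
  have hev : (fun s => ∫ τ in (0:ℝ)..s, ∫ ξ in Ω, kernelK V x s ξ τ * p ξ τ)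
      =ᶠ[nhds t] (fun s => ∫ z, (if z.2 < s then KW V ((x, s), z) else 0) * p z.1 z.2 ∂μ) := by
    filter_upwards [isOpen_Ioo.mem_nhds (⟨ht0, ht1⟩ : t ∈ Set.Ioo 0 t₀)] with s hs
    simp only [hkeq]
    exact (reprI (KW V) hKc (x, s) s hs.1.le hs.2.le).symm
  have hDt : deriv (fun s => ∫ τ in (0:ℝ)..s, ∫ ξ in Ω, kernelK V x s ξ τ * p ξ τ) t
      = ∫ z, (if z.2 < t then pd dirT (KW V) ((x, t), z) else 0) * p z.1 z.2 ∂μ := by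
    rw [hev.deriv_eq]
    exact hderiv.deriv
  -- ====== the spatial derivatives ======
  have hcu : ∀ i : Fin 3, Continuous (fun a : ℝ => (Function.update x i a : Fin 3 → ℝ)) := by
    intro i
    have h : (fun a : ℝ => Function.update x i a)
        = fun a : ℝ => Function.update x i 0 + a • (Pi.single i 1 : Fin 3 → ℝ) :=
      funext fun a => update_eq0 x i a
    rw [h]
    exact continuous_const.add (continuous_id.smul continuous_const)
  have step : ∀ (i : Fin 3) (f : E4 → ℝ), ContDiff ℝ (⊤ : ℕ∞) f → ∀ y : ℝ,
      HasDerivAt (fun y' => ∫ z,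
          (if z.2 < t then f ((Function.update x i y', t), z) else 0) * p z.1 z.2 ∂μ)
        (∫ z, (if z.2 < t then pd (dirX i) f ((Function.update x i y, t), z) else 0)
          * p z.1 z.2 ∂μ) y := by
    intro i f hfsm y
    have hfc := hfsm.continuous
    have hfd := hfsm.differentiable (by simp)
    have hK₁ : IsCompact ((fun a : ℝ => ((Function.update x i a : Fin 3 → ℝ), t)) ''
        Set.Icc (y - 1) (y + 1)) :=
      isCompact_Icc.image ((hcu i).prodMk continuous_const)
    obtain ⟨C', hC'0, hC'b⟩ := bnd (pd (dirX i) f) (pd_contDiff hfsm (dirX i)).continuous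
      _ hK₁
    refine (hasDerivAt_integral_of_dominated_loc_of_deriv_le
      (F := fun y' (z : (Fin 3 → ℝ) × ℝ) =>
        (if z.2 < t then f ((Function.update x i y', t), z) else 0) * p z.1 z.2)
      (F' := fun y' (z : (Fin 3 → ℝ) × ℝ) =>
        (if z.2 < t then pd (dirX i) f ((Function.update x i y', t), z) else 0) * p z.1 z.2)
      (bound := fun z : (Fin 3 → ℝ) × ℝ => C' * ‖p z.1 z.2‖)
      (Metric.ball_mem_nhds y one_pos)
      (Filter.Eventually.of_forall fun y' => measH t f hfc (Function.update x i y', t))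
      (intg_ind t f hfc (Function.update x i y, t))
      (measH t (pd (dirX i) f) (pd_contDiff hfsm (dirX i)).continuous
        (Function.update x i y, t))
      ?_ (hpint.norm.const_mul C') ?_).2
    · -- bound
      filter_upwards [haemem] with z hz
      intro y' hy'
      have hmem : ((Function.update x i y' : Fin 3 → ℝ), t) ∈
          (fun a : ℝ => ((Function.update x i a : Fin 3 → ℝ), t)) '' Set.Icc (y - 1) (y + 1) := by
        refine ⟨y', ?_, rfl⟩
        rw [Metric.mem_ball, Real.dist_eq] at hy'
        have h1 := abs_lt.1 hy'
        constructor <;> linarith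
      have hb := hC'b _ hmem z.1 (subset_closure hz.1) z.2 ⟨hz.2.1.le, hz.2.2.le⟩
      rw [Real.norm_eq_abs, abs_mul]
      by_cases h : z.2 < t
      · rw [if_pos h]
        exact mul_le_mul_of_nonneg_right (by simpa using hb) (abs_nonneg _)
      · rw [if_neg h, abs_zero, zero_mul]
        positivity
    · -- differentiability
      filter_upwards with z
      intro y' _
      by_cases h : z.2 < t
      · simp only [if_pos h]
        exact (hasDerivAt_sliceX hfd x t z i y').mul_const _
      · simp only [if_neg h, zero_mul]
        exact hasDerivAt_const _ 0
  have hsp : ∀ i : Fin 3,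
      deriv (deriv (fun y =>
        ∫ τ in (0:ℝ)..t, ∫ ξ in Ω, kernelK V (Function.update x i y) t ξ τ * p ξ τ)) (x i)
      = ∫ z, (if z.2 < t then pd (dirX i) (pd (dirX i) (KW V)) ((x, t), z) else 0)
          * p z.1 z.2 ∂μ := by
    intro i
    have hfun : (fun y =>
        ∫ τ in (0:ℝ)..t, ∫ ξ in Ω, kernelK V (Function.update x i y) t ξ τ * p ξ τ)
        = fun y => ∫ z,
          (if z.2 < t then KW V ((Function.update x i y, t), z) else 0) * p z.1 z.2 ∂μ := by
      funext y
      simp only [hkeq]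
      exact (reprI (KW V) hKc (Function.update x i y, t) t ht0.le ht1.le).symm
    rw [hfun]
    have hd1 : deriv (fun y => ∫ z,
        (if z.2 < t then KW V ((Function.update x i y, t), z) else 0) * p z.1 z.2 ∂μ)
        = fun y => ∫ z,
          (if z.2 < t then pd (dirX i) (KW V) ((Function.update x i y, t), z) else 0)
            * p z.1 z.2 ∂μ :=
      funext fun y => (step i (KW V) hKsm y).deriv
    rw [hd1]
    have hd2 := (step i (pd (dirX i) (KW V)) (pd_contDiff hKsm (dirX i)) (x i)).deriv
    rwa [Function.update_eq_self] at hd2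
  -- ====== assembling ======
  rw [hDt]
  simp only [hsp]
  have hptwise : ∀ z : (Fin 3 → ℝ) × ℝ,
      (if z.2 < t then pd dirT (KW V) ((x, t), z) else 0) * p z.1 z.2
      = ρ * ∑ i : Fin 3,
          (if z.2 < t then pd (dirX i) (pd (dirX i) (KW V)) ((x, t), z) else 0) * p z.1 z.2 := by
    intro z
    by_cases h : z.2 < t
    · simp only [if_pos h, hKheat ((x, t), z)]
      rw [mul_assoc, Finset.sum_mul]
    · simp [if_neg h]
  have h1 : (∫ z, (if z.2 < t then pd dirT (KW V) ((x, t), z) else 0) * p z.1 z.2 ∂μ)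
      = ρ * ∑ i : Fin 3, ∫ z,
          (if z.2 < t then pd (dirX i) (pd (dirX i) (KW V)) ((x, t), z) else 0)
            * p z.1 z.2 ∂μ := by
    simp only [hptwise]
    rw [integral_const_mul]
    congr 1
    exact integral_finset_sum _ (fun i _ => intg_ind t (pd (dirX i) (pd (dirX i) (KW V)))
      (pd_contDiff (pd_contDiff hKsm (dirX i)) (dirX i)).continuous (x, t))
  rw [h1, sub_self]
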